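/- arXiv:1212.0506 — 2 statements merged into one kernel-verified Lean document; each statement's English description precedes it below -/
import Mathlib

section
/- Let u ∈ 𝔻[ω]^n be a vector. If ‖u‖² = Σ_j |u_j|² is an integer, then weight(u)² = ‖u‖², where weight(u)² = Σ_j weight(u_j)². -/
noncomputable section

/-- The eighth root of unity `ω = e^{iπ/4} = (1+i)/√2`. -/
def ω : ℂ := (1 + Complex.I) / Real.sqrt 2

/-- A rational number is dyadic if it has the form `a / 2^n` with `a ∈ ℤ`, `n ∈ ℕ`. -/
def IsDyadic (q : ℚ) : Prop := ∃ (a : ℤ) (n : ℕ), q = a / 2 ^ n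

/-- Membership in the ring `𝔻[ω] = ℤ[1/√2, i]`: complex numbers of the form
`aω³ + bω² + cω + d` with `a, b, c, d` dyadic rationals. -/
def inDω (t : ℂ) : Prop :=
  ∃ a b c d : ℚ, IsDyadic a ∧ IsDyadic b ∧ IsDyadic c ∧ IsDyadic d ∧
    t = (a : ℂ) * ω ^ 3 + (b : ℂ) * ω ^ 2 + (c : ℂ) * ω + (d : ℂ)

/-- Membership in the ring `ℤ[ω]`: complex numbers of the form
`aω³ + bω² + cω + d` with `a, b, c, d ∈ ℤ`. -/
def inZω (t : ℂ) : Prop :=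
  ∃ a b c d : ℤ, t = (a : ℂ) * ω ^ 3 + (b : ℂ) * ω ^ 2 + (c : ℂ) * ω + (d : ℂ)

/-!
For real `a, b, c, d`, a direct computation with `ω² = i` gives
`|aω³ + bω² + cω + d|² = (a² + b² + c² + d²) + √2 (ab + bc + cd - da)`.
Summing over the coordinates, `‖u‖² = weight(u)² + √2 T` with `weight(u)², T` rational,
so if `‖u‖²` is an integer, the irrationality of `√2` forces `T = 0`.
-/

lemma ω_re : ω.re = √2 / 2 := by
  simp [ω, Complex.div_re, Complex.normSq_apply]

lemma ω_im : ω.im = √2 / 2 := by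
  simp [ω, Complex.div_im, Complex.normSq_apply]

lemma ω_sq : ω ^ 2 = Complex.I := by
  have h2 : ((√2 : ℝ) : ℂ) ^ 2 = 2 := by norm_cast; exact Real.sq_sqrt zero_le_two
  rw [ω, div_pow, h2, add_sq, Complex.I_sq]
  ring

lemma normSq_ω_expansion (a b c d : ℝ) :
    Complex.normSq (a * ω ^ 3 + b * ω ^ 2 + c * ω + d) =
      a ^ 2 + b ^ 2 + c ^ 2 + d ^ 2 + √2 * (a * b + b * c + c * d - d * a) := by
  have h2 : √2 ^ 2 = 2 := Real.sq_sqrt zero_le_two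
  rw [pow_succ, ω_sq, Complex.normSq_apply]
  simp only [Complex.add_re, Complex.add_im, Complex.mul_re, Complex.mul_im, Complex.ofReal_re,
    Complex.ofReal_im, Complex.I_re, Complex.I_im, ω_re, ω_im]
  linear_combination (a ^ 2 + c ^ 2) / 2 * h2

lemma eq_zero_of_add_sqrt_two_mul_eq_rat {p q r : ℚ} (h : (p : ℝ) + √2 * q = r) : q = 0 := by
  by_contra hq
  refine irrational_sqrt_two.ne_rat ((r - p) / q) ?_
  push_cast
  rw [eq_div_iff (by exact_mod_cast hq)]
  linarith

theorem stmt2_general (n : ℕ) (u : Fin n → ℂ) (a b c d : Fin n → ℚ)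
    (hu : ∀ j, u j = (a j : ℂ) * ω ^ 3 + (b j : ℂ) * ω ^ 2 + (c j : ℂ) * ω + (d j : ℂ))
    (N : ℤ) (hN : ∑ j, Complex.normSq (u j) = (N : ℝ)) :
    ∑ j, ((a j) ^ 2 + (b j) ^ 2 + (c j) ^ 2 + (d j) ^ 2) = (N : ℚ) := by
  set S := ∑ j, ((a j) ^ 2 + (b j) ^ 2 + (c j) ^ 2 + (d j) ^ 2)
  set T := ∑ j, (a j * b j + b j * c j + c j * d j - d j * a j)
  have hST : (S : ℝ) + √2 * T = (N : ℚ) := by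
    rw [Rat.cast_intCast, ← hN]
    simp only [S, T, Rat.cast_sum, Finset.mul_sum, ← Finset.sum_add_distrib]
    refine Finset.sum_congr rfl fun j _ => ?_
    rw [hu j]
    exact_mod_cast (normSq_ω_expansion (a j) (b j) (c j) (d j)).symm
  rw [eq_zero_of_add_sqrt_two_mul_eq_rat hST, Rat.cast_zero, mul_zero, add_zero] at hST
  exact_mod_cast hST

/-- If `u ∈ 𝔻[ω]^n` (with `u_j = a_jω³ + b_jω² + c_jω + d_j`, coefficients dyadic) and
`‖u‖² = Σ_j |u_j|²` is an integer `N`, then `weight(u)² = Σ_j (a_j²+b_j²+c_j²+d_j²) = N`. -/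
theorem stmt2 (n : ℕ) (u : Fin n → ℂ) (a b c d : Fin n → ℚ)
    (hdy : ∀ j, IsDyadic (a j) ∧ IsDyadic (b j) ∧ IsDyadic (c j) ∧ IsDyadic (d j))
    (hu : ∀ j, u j = (a j : ℂ) * ω ^ 3 + (b j : ℂ) * ω ^ 2 + (c j : ℂ) * ω + (d j : ℂ))
    (N : ℤ) (hN : ∑ j, Complex.normSq (u j) = (N : ℝ)) :
    ∑ j, ((a j) ^ 2 + (b j) ^ 2 + (c j) ^ 2 + (d j) ^ 2) = (N : ℚ) :=
  stmt2_general n u a b c d hu N hN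
end
end

section
/- Let x₁, ..., x_n ∈ ℤ[ω] satisfy x̄₁x₁ + ⋯ + x̄ₙxₙ ≡ 0 (mod 2), where x̄ denotes complex conjugation. Then the number of indices j with x̄_j x_j ≡ 1 (mod 2) is even, and the number of indices j with x̄_j x_j ≡ ω + ω³ (mod 2) is even. -/
noncomputable section

/-!
For `x = aω³ + bω² + cω + d` one has `x̄x = N + M√2` with `√2 = ω - ω³`,
`N = a² + b² + c² + d²` and `M = ab + bc + cd - ad`. Since `1, ω, ω², ω³` are linearly
independent over `ℚ`, a number of `ℤ[ω]` is divisible by `2` exactly when its four coordinates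
are even, so `x̄x ≡ 1` means `N` odd, `M` even and `x̄x ≡ ω + ω³` means `N` even, `M` odd.
Modulo `2`, `N ≡ (a + c) + (b + d)` and `M ≡ (a + c)(b + d)`, so `N` and `M` are never both
odd: the two sets in question are those of the odd `N_j` and of the odd `M_j`. The hypothesis
says that `∑ N_j` and `∑ M_j` are even, hence so are the numbers of odd terms.
-/

open Complex Finset

theorem omega_sq : ω ^ 2 = I := by
  have h2 : ((√2 : ℝ) : ℂ) ^ 2 = 2 := by norm_cast; simp
  rw [ω, div_pow, h2]
  field_simp
  ring_nf
  rw [I_sq]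
  ring

theorem omega_pow_four : ω ^ 4 = -1 := by
  rw [show 4 = 2 * 2 from rfl, pow_mul, omega_sq, I_sq]

theorem sqrt_two_mul_omega : (√2 : ℂ) * ω = 1 + I := by
  rw [ω]
  field_simp

theorem conj_omega : starRingEnd ℂ ω = -ω ^ 3 := by
  rw [pow_succ', omega_sq, ω]
  simp [map_div₀, conj_ofReal]
  field_simp
  ring_nf
  rw [I_sq]
  ring

theorem int_eq_zero_of_add_mul_sqrt_two_eq_zero {m n : ℤ} (h : (m : ℝ) + n * √2 = 0) :
    m = 0 ∧ n = 0 := by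
  obtain rfl : n = 0 := by
    by_contra hn
    exact ((irrational_sqrt_two.intCast_mul hn).intCast_add m).ne_zero h
  simpa using h

theorem int_coeffs_eq_zero {a b c d : ℤ} (h : (a : ℂ) * ω ^ 3 + b * ω ^ 2 + c * ω + d = 0) :
    a = 0 ∧ b = 0 ∧ c = 0 ∧ d = 0 := by
  have key : ((c - a + d * √2 : ℝ) : ℂ) + ((a + c + b * √2 : ℝ) : ℂ) * I = 0 := by
    push_cast
    linear_combination (√2 : ℂ) * h - (a * ω ^ 2 + c) * sqrt_two_mul_omega
      - (a * (1 + I) + (√2 : ℂ) * b) * omega_sq - a * I_sq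
  simp only [Complex.ext_iff, add_re, add_im, mul_re, mul_im, ofReal_re, ofReal_im, I_re, I_im,
    zero_re, zero_im, mul_zero, mul_one, sub_zero, add_zero, zero_add] at key
  obtain ⟨hca, hd⟩ := int_eq_zero_of_add_mul_sqrt_two_eq_zero (m := c - a) (n := d)
    (by push_cast; linarith [key.1])
  obtain ⟨hac, hb⟩ := int_eq_zero_of_add_mul_sqrt_two_eq_zero (m := a + c) (n := b)
    (by push_cast; linarith [key.2])
  omega

theorem inZω_half_iff (A B C D : ℤ) :
    inZω ((A * ω ^ 3 + B * ω ^ 2 + C * ω + D) / 2) ↔ Even A ∧ Even B ∧ Even C ∧ Even D := by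
  constructor
  · rintro ⟨a, b, c, d, h⟩
    obtain ⟨ha, hb, hc, hd⟩ := int_coeffs_eq_zero (a := A - 2 * a) (b := B - 2 * b)
      (c := C - 2 * c) (d := D - 2 * d) (by push_cast; linear_combination 2 * h)
    exact ⟨⟨a, by omega⟩, ⟨b, by omega⟩, ⟨c, by omega⟩, ⟨d, by omega⟩⟩
  · rintro ⟨⟨a, rfl⟩, ⟨b, rfl⟩, ⟨c, rfl⟩, ⟨d, rfl⟩⟩
    exact ⟨a, b, c, d, by push_cast; ring⟩

section HalfOfNormForm

variable {N M : ℤ}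

theorem inZω_half_add_mul_iff :
    inZω ((N + M * (ω - ω ^ 3)) / 2) ↔ Even N ∧ Even M := by
  rw [show (N + M * (ω - ω ^ 3) : ℂ) = ((-M : ℤ) : ℂ) * ω ^ 3 + ((0 : ℤ) : ℂ) * ω ^ 2 + M * ω + N
    by push_cast; ring, inZω_half_iff]
  simp only [even_neg, Even.zero, true_and]
  tauto

theorem inZω_half_add_mul_sub_one_iff (hNM : Odd N → Even M) :
    inZω ((N + M * (ω - ω ^ 3) - 1) / 2) ↔ Odd N := by
  rw [show (N + M * (ω - ω ^ 3) - 1 : ℂ) =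
      ((-M : ℤ) : ℂ) * ω ^ 3 + ((0 : ℤ) : ℂ) * ω ^ 2 + M * ω + ((N - 1 : ℤ) : ℂ)
    by push_cast; ring, inZω_half_iff]
  simp only [even_neg, Even.zero, true_and, Int.even_sub_one, Int.not_even_iff_odd]
  tauto

theorem inZω_half_add_mul_sub_omega_add_omega_cube_iff (hNM : Odd N → Even M) :
    inZω ((N + M * (ω - ω ^ 3) - (ω + ω ^ 3)) / 2) ↔ Odd M := by
  rw [show (N + M * (ω - ω ^ 3) - (ω + ω ^ 3) : ℂ) =
      ((-(M + 1) : ℤ) : ℂ) * ω ^ 3 + ((0 : ℤ) : ℂ) * ω ^ 2 + ((M - 1 : ℤ) : ℂ) * ω + N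
    by push_cast; ring, inZω_half_iff]
  simp only [Even.zero, true_and, Int.even_sub_one, even_neg, Int.even_add_one]
  rw [← Int.not_even_iff_odd] at hNM ⊢
  tauto

end HalfOfNormForm

theorem conj_mul_self_eq (a b c d : ℤ) :
    starRingEnd ℂ (a * ω ^ 3 + b * ω ^ 2 + c * ω + d) * (a * ω ^ 3 + b * ω ^ 2 + c * ω + d) =
      ((a ^ 2 + b ^ 2 + c ^ 2 + d ^ 2 : ℤ) : ℂ) +
        ((a * b + b * c + c * d - a * d : ℤ) : ℂ) * (ω - ω ^ 3) := by
  have hconj : starRingEnd ℂ (a * ω ^ 3 + b * ω ^ 2 + c * ω + d) =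
      -a * ω - b * ω ^ 2 - c * ω ^ 3 + d := by
    simp only [map_add, map_mul, map_intCast, map_pow, conj_omega]
    linear_combination (-a * ω * (ω ^ 4 - 1) + b * ω ^ 2) * omega_pow_four
  rw [hconj]
  push_cast
  linear_combination
    (-(a ^ 2 + b ^ 2 + c ^ 2 : ℂ) - (a * b + b * c) * ω - a * c * ω ^ 2) * omega_pow_four

theorem even_cross_of_odd_sum_sq {a b c d : ℤ} (h : Odd (a ^ 2 + b ^ 2 + c ^ 2 + d ^ 2)) :
    Even (a * b + b * c + c * d - a * d) := by
  have mod_two : ∀ a b c d : ZMod 2,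
      a ^ 2 + b ^ 2 + c ^ 2 + d ^ 2 = 1 → a * b + b * c + c * d - a * d = 0 := by decide
  rw [← ZMod.intCast_eq_one_iff_odd] at h
  rw [← ZMod.intCast_eq_zero_iff_even]
  push_cast at h ⊢
  exact mod_two _ _ _ _ h

theorem exists_conj_mul_self_eq {x : ℂ} (hx : inZω x) :
    ∃ N M : ℤ, starRingEnd ℂ x * x = N + M * (ω - ω ^ 3) ∧ (Odd N → Even M) := by
  obtain ⟨a, b, c, d, rfl⟩ := hx
  exact ⟨_, _, conj_mul_self_eq a b c d, even_cross_of_odd_sum_sq⟩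

theorem even_ncard_setOf_odd {ι : Type*} [Fintype ι] {f : ι → ℤ} (h : Even (∑ i, f i)) :
    Even {i | Odd (f i)}.ncard := by
  classical
  rw [← ZMod.intCast_eq_zero_iff_even, Int.cast_sum] at h
  rw [← ZMod.natCast_eq_zero_iff_even, Set.ncard_eq_toFinset_card', Set.toFinset_ofPred,
    natCast_card_filter]
  refine (sum_congr rfl fun i _ => ?_).trans h
  split_ifs with hi
  · exact (ZMod.intCast_eq_one_iff_odd.2 hi).symm
  · exact (ZMod.intCast_eq_zero_iff_even.2 (Int.not_odd_iff_even.1 hi)).symm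

/-- If `x₁, …, x_n ∈ ℤ[ω]` satisfy `x̄₁x₁ + ⋯ + x̄ₙxₙ ≡ 0 (mod 2)`, then the number of
indices `j` with `x̄_j x_j ≡ 1 (mod 2)` is even, and the number of indices `j` with
`x̄_j x_j ≡ ω + ω³ (mod 2)` is even. -/
theorem stmt14 (n : ℕ) (x : Fin n → ℂ) (hx : ∀ j, inZω (x j))
    (h : inZω ((∑ j, (starRingEnd ℂ) (x j) * x j) / 2)) :
    Even {j : Fin n | inZω (((starRingEnd ℂ) (x j) * x j - 1) / 2)}.ncard ∧
    Even {j : Fin n | inZω (((starRingEnd ℂ) (x j) * x j - (ω + ω ^ 3)) / 2)}.ncard := by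
  choose N M hxx hNM using fun j => exists_conj_mul_self_eq (hx j)
  have hsum : ∑ j, starRingEnd ℂ (x j) * x j =
      ((∑ j, N j : ℤ) : ℂ) + ((∑ j, M j : ℤ) : ℂ) * (ω - ω ^ 3) := by
    simp only [hxx, sum_add_distrib, sum_mul, Int.cast_sum]
  rw [hsum, inZω_half_add_mul_iff] at h
  simp only [hxx, inZω_half_add_mul_sub_one_iff (hNM _),
    inZω_half_add_mul_sub_omega_add_omega_cube_iff (hNM _)]
  exact ⟨even_ncard_setOf_odd h.1, even_ncard_setOf_odd h.2⟩
end
end
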